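/- arXiv:2112.02698 — 3 statements merged into one kernel-verified Lean document; each statement's English description precedes it below -/
import Mathlib

section
/- Let h_H, h_V, h_{V'}, c_H be nonzero real numbers and let k be a nonzero rational number. Suppose c_H / h_V is irrational. If d_0, d_1, d_2 are rational numbers satisfying d_1/h_V + d_2/h_{V'} = 0 and d_0/h_H + d_2·k·c_H/(h_{V'}·h_H) = 0, then d_0 = d_1 = d_2 = 0. -/
/-! Clearing denominators, both constraints say that `(d₁, d₀) = -t • (h_V, k c_H)` with
`t = d₂ / h_V'`. If `t ≠ 0`, the rational number `d₀ / d₁` would equal the irrational `k c_H / h_V`;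
hence `t = 0`, and then all three `d`'s vanish. -/

theorem Irrational.eq_zero_of_mul_eq_ratCast {x y t : ℝ} (hxy : Irrational (x / y)) {a b : ℚ}
    (ha : t * x = a) (hb : t * y = b) : t = 0 := by
  by_contra ht
  refine hxy ⟨a / b, ?_⟩
  rw [Rat.cast_div, ← ha, ← hb, mul_div_mul_left x y ht]

theorem nondegenerate_constraint_general
    (hH hV hV' cH : ℝ) (hhH : hH ≠ 0) (hhV' : hV' ≠ 0)
    (k : ℚ) (hk : k ≠ 0)
    (hirr : Irrational (cH / hV))
    (d₀ d₁ d₂ : ℚ)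
    (h1 : (d₁ : ℝ) / hV + (d₂ : ℝ) / hV' = 0)
    (h2 : (d₀ : ℝ) / hH + (d₂ : ℝ) * (k : ℝ) * cH / (hV' * hH) = 0) :
    d₀ = 0 ∧ d₁ = 0 ∧ d₂ = 0 := by
  have hhV : hV ≠ 0 := (div_ne_zero_iff.1 hirr.ne_zero).2
  have hd₁ : (d₂ / hV' : ℝ) * hV = ((-d₁ : ℚ) : ℝ) := by
    push_cast; field_simp at h1 ⊢; linarith
  have hd₀ : (d₂ / hV' : ℝ) * (k * cH) = ((-d₀ : ℚ) : ℝ) := by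
    push_cast; field_simp at h2 ⊢; linarith
  have hirr' : Irrational (k * cH / hV) := by
    rw [mul_div_assoc]; exact hirr.ratCast_mul hk
  have ht := hirr'.eq_zero_of_mul_eq_ratCast hd₀ hd₁
  rw [ht, zero_mul, eq_comm, Rat.cast_eq_zero, neg_eq_zero] at hd₀ hd₁
  rw [div_eq_zero_iff, Rat.cast_eq_zero] at ht
  exact ⟨hd₀, hd₁, ht.resolve_right hhV'⟩

/-- Nondegeneracy step: if `c_H / h_V` is irrational and rational numbers
`d₀, d₁, d₂` satisfy `d₁/h_V + d₂/h_V' = 0` and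
`d₀/h_H + d₂·k·c_H/(h_V'·h_H) = 0`, then `d₀ = d₁ = d₂ = 0`. -/
theorem nondegenerate_constraint
    (hH hV hV' cH : ℝ) (hhH : hH ≠ 0) (hhV : hV ≠ 0) (hhV' : hV' ≠ 0)
    (hcH : cH ≠ 0) (k : ℚ) (hk : k ≠ 0)
    (hirr : Irrational (cH / hV))
    (d₀ d₁ d₂ : ℚ)
    (h1 : (d₁ : ℝ) / hV + (d₂ : ℝ) / hV' = 0)
    (h2 : (d₀ : ℝ) / hH + (d₂ : ℝ) * (k : ℝ) * cH / (hV' * hH) = 0) :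
    d₀ = 0 ∧ d₁ = 0 ∧ d₂ = 0 :=
  nondegenerate_constraint_general hH hV hV' cH hhH hhV' k hk hirr d₀ d₁ d₂ h1 h2
end

section
/- Let t_H > 0 and t_V > 0 be real numbers, let a ≥ 1 be an integer, and let A = M_H(t_H)^a · M_V(t_V)^a. If v = (x, y) and w = (x', y') are nonzero vectors in ℝ² with A·v = λ·v and A·w = μ·w for distinct real numbers λ ≠ μ, then y ≠ 0, y' ≠ 0, and the product of the slopes satisfies (x/y)·(x'/y') = −t_H/t_V. -/
open Matrix

/-- The horizontal shear matrix `[[1, t], [0, 1]]`. -/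
def MH (t : ℝ) : Matrix (Fin 2) (Fin 2) ℝ := !![1, t; 0, 1]

/-- The vertical shear matrix `[[1, 0], [t, 1]]`. -/
def MV (t : ℝ) : Matrix (Fin 2) (Fin 2) ℝ := !![1, 0; t, 1]

lemma MH_pow (t : ℝ) (n : ℕ) : (MH t) ^ n = !![1, n*t; 0, 1] := by
  induction n with
  | zero => simp [Matrix.one_fin_two]
  | succ n ih =>
    rw [pow_succ, ih, MH]
    ext i j
    fin_cases i <;> fin_cases j <;> simp [Matrix.mul_apply, Fin.sum_univ_two] <;> ring

lemma MV_pow (t : ℝ) (n : ℕ) : (MV t) ^ n = !![1, 0; n*t, 1] := by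
  induction n with
  | zero => simp [Matrix.one_fin_two]
  | succ n ih =>
    rw [pow_succ, ih, MV]
    ext i j
    fin_cases i <;> fin_cases j <;> simp [Matrix.mul_apply, Fin.sum_univ_two] <;> ring

/-- If `(x, y)` and `(x', y')` are nonzero eigenvectors of
`A = M_H(t_H)^a · M_V(t_V)^a` for distinct real eigenvalues, then
`y ≠ 0`, `y' ≠ 0`, and `(x/y)·(x'/y') = −t_H/t_V`. -/
theorem eigenvector_slope_product (tH tV : ℝ) (htH : 0 < tH) (htV : 0 < tV)
    (a : ℕ) (ha : 1 ≤ a)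
    (x y x' y' lam mu : ℝ)
    (hv : ![x, y] ≠ 0) (hw : ![x', y'] ≠ 0) (hlm : lam ≠ mu)
    (heig₁ : ((MH tH) ^ a * (MV tV) ^ a).mulVec ![x, y] = lam • ![x, y])
    (heig₂ : ((MH tH) ^ a * (MV tV) ^ a).mulVec ![x', y'] = mu • ![x', y']) :
    y ≠ 0 ∧ y' ≠ 0 ∧ (x / y) * (x' / y') = -tH / tV := by
  have ha' : (0:ℝ) < a := by exact_mod_cast Nat.lt_of_lt_of_le Nat.zero_lt_one ha
  rw [MH_pow, MV_pow] at heig₁ heig₂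
  have e1 := congrFun heig₁ 0
  have e2 := congrFun heig₁ 1
  have e3 := congrFun heig₂ 0
  have e4 := congrFun heig₂ 1
  simp [Matrix.mulVec, Matrix.mul_apply, Fin.sum_univ_two, dotProduct,
    Fin.isValue] at e1 e2 e3 e4
  have hy : y ≠ 0 := by
    intro h
    apply hv
    have hx : x = 0 := by
      have := e2
      rw [h] at this
      nlinarith [mul_pos ha' htV]
    funext i; fin_cases i <;> simp [hx, h]
  have hy' : y' ≠ 0 := by
    intro h
    apply hw
    have hx : x' = 0 := by
      have := e4
      rw [h] at this
      nlinarith [mul_pos ha' htV]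
    funext i; fin_cases i <;> simp [hx, h]
  refine ⟨hy, hy', ?_⟩
  have hD : x * y' - x' * y ≠ 0 := by
    intro h
    apply hlm
    have h5 : lam * (y * y') = mu * (y * y') := by
      linear_combination y * e4 - y' * e2 + ((a:ℝ)*tV) * h
    have := mul_ne_zero hy hy'
    field_simp at h5
    rcases h5 with h5 | h5 | h5 <;> tauto
  have P1 : (a*tV) * x^2 - ((a:ℝ)*tH*(a*tV)) * (x*y) - (a*tH) * y^2 = 0 := by
    linear_combination x * e2 - y * e1
  have P2 : (a*tV) * x'^2 - ((a:ℝ)*tH*(a*tV)) * (x'*y') - (a*tH) * y'^2 = 0 := by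
    linear_combination x' * e4 - y' * e3
  have key : ((a:ℝ)*tV * (x*x') + (a:ℝ)*tH * (y*y')) * (x*y' - x'*y) = 0 := by
    linear_combination x'*y'*P1 - x*y*P2
  have key2 : (a:ℝ)*tV * (x*x') + (a:ℝ)*tH * (y*y') = 0 :=
    (mul_eq_zero.mp key).resolve_right hD
  field_simp
  nlinarith [key2]
end

section
/- Let O = (0, 0) and P₁ = (x₁, y₁), P₂ = (x₂, y₂), P₃ = (x₃, y₃) be points of ℝ² with 0 ≤ y₁ ≤ y₂ and 0 < y₃ < y₂, and suppose P₁ and P₃ lie strictly on opposite sides of the line through O and P₂ (so the triangles O P₂ P₃ and O P₁ P₂ are nondegenerate and form a hinge glued along the edge O P₂). For t ∈ ℝ let g_t = diag(e^{−t}, e^{t}) act linearly on ℝ². Then there exists T ≥ 0 such that for all t ≥ T, the sum of the two angles opposite the shared edge exceeds π: ∠(g_t·O, g_t·P₃, g_t·P₂) + ∠(g_t·O, g_t·P₁, g_t·P₂) > π, where ∠(A, B, C) denotes the Euclidean angle at the vertex B between the segments BA and BC. In particular, the hinge fails the local Delaunay condition (dihedral angle ≤ π) for all sufficiently large t, i.e.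 it is not eternally Delaunay. -/
/-!
Under `g_t` a vector `(a, b)` becomes `(e^{-t} a, e^t b)`; after a positive rescaling it tends
to `(0, b)` if `b ≠ 0` and is constantly `(a, 0)` if `b = 0`. Angles are invariant under positive
rescaling, so every angle of the flowed hinge converges to the angle between these limiting
directions, whose inner product is the product of the vertical components. At `P₃` the two edges
have vertical components `-y₃ < 0 < y₂ - y₃`, so the limiting angle exceeds `π / 2`; at `P₁` they
are `-y₁ ≤ 0 ≤ y₂ - y₁`, not both zero, so the limiting angle is at least `π / 2`. Hence the sum
of the two angles eventually exceeds `π`.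
-/

open EuclideanGeometry

/-- The point of the Euclidean plane with coordinates `(x, y)`. -/
noncomputable def pt (x y : ℝ) : EuclideanSpace ℝ (Fin 2) := !₂[x, y]

/-- The Teichmüller geodesic flow `g_t = diag(e^{−t}, e^{t})` acting on the
Euclidean plane. -/
noncomputable def gFlow (t : ℝ) (p : EuclideanSpace ℝ (Fin 2)) :
    EuclideanSpace ℝ (Fin 2) :=
  pt (Real.exp (-t) * p 0) (Real.exp t * p 1)

open Real Filter Topology
open InnerProductGeometry hiding angle

namespace InnerProductGeometry

variable {V : Type*} [NormedAddCommGroup V] [InnerProductSpace ℝ V]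

theorem pi_div_two_le_angle_of_inner_nonpos {x y : V} (h : inner ℝ x y ≤ 0) :
    π / 2 ≤ angle x y := by
  rw [angle, ← not_lt, arccos_lt_pi_div_two, not_lt]
  exact div_nonpos_of_nonpos_of_nonneg h (by positivity)

theorem pi_div_two_lt_angle_of_inner_neg {x y : V} (h : inner ℝ x y < 0) :
    π / 2 < angle x y := by
  have hxy : 0 < ‖x‖ * ‖y‖ :=
    (neg_pos.2 h).trans_le ((neg_le_abs _).trans (abs_real_inner_le_norm x y))
  rw [angle, ← not_le, arccos_le_pi_div_two, not_le]
  exact div_neg_of_neg_of_pos h hxy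

end InnerProductGeometry

@[simp]
theorem pt_apply_zero (x y : ℝ) : pt x y 0 = x := rfl

@[simp]
theorem pt_apply_one (x y : ℝ) : pt x y 1 = y := rfl

theorem pt_inj {a b c d : ℝ} : pt a b = pt c d ↔ a = c ∧ b = d := by
  refine ⟨fun h => ⟨by simpa using congrArg (· 0) h, by simpa using congrArg (· 1) h⟩, ?_⟩
  rintro ⟨rfl, rfl⟩
  rfl

theorem gFlow_sub (t : ℝ) (p q : EuclideanSpace ℝ (Fin 2)) :
    gFlow t p - gFlow t q = gFlow t (p - q) := by
  ext i
  fin_cases i <;> simp [gFlow, mul_sub]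

/-- The limit of `gFlow t v` as `t → ∞`, up to a positive rescaling. -/
noncomputable def gFlowLimit (v : EuclideanSpace ℝ (Fin 2)) : EuclideanSpace ℝ (Fin 2) :=
  if v 1 = 0 then v else pt 0 (v 1)

theorem exists_pos_smul_gFlow_tendsto (v : EuclideanSpace ℝ (Fin 2)) :
    ∃ c : ℝ → ℝ, (∀ t, 0 < c t) ∧
      Tendsto (fun t => c t • gFlow t v) atTop (𝓝 (gFlowLimit v)) := by
  by_cases hv : v 1 = 0
  · refine ⟨exp, exp_pos, ?_⟩
    have hconst : ∀ t, exp t • gFlow t v = v := fun t => by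
      ext i
      fin_cases i <;> simp [gFlow, hv, ← mul_assoc, ← exp_add]
    simpa only [hconst, gFlowLimit, if_pos hv] using tendsto_const_nhds
  · refine ⟨fun t => exp (-t), fun t => exp_pos _, ?_⟩
    have hsplit : ∀ t, exp (-t) • gFlow t v = (exp (-t) * exp (-t) * v 0) • pt 1 0 + pt 0 (v 1) :=
      fun t => by
        ext i
        fin_cases i <;> simp [gFlow, ← mul_assoc, ← exp_add]
    have hcoeff : Tendsto (fun t => exp (-t) * exp (-t) * v 0) atTop (𝓝 0) := by
      simpa using (tendsto_exp_neg_atTop_nhds_zero.mul tendsto_exp_neg_atTop_nhds_zero).mul_const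
        (v 0)
    simpa only [hsplit, gFlowLimit, if_neg hv, zero_smul, zero_add] using
      (hcoeff.smul_const (pt 1 0)).add_const (pt 0 (v 1))

theorem gFlowLimit_ne_zero {v : EuclideanSpace ℝ (Fin 2)} (hv : v ≠ 0) : gFlowLimit v ≠ 0 := by
  unfold gFlowLimit
  split_ifs with h
  · exact hv
  · exact fun h0 => h (by simpa using congrArg (· 1) h0)

theorem inner_gFlowLimit {v w : EuclideanSpace ℝ (Fin 2)} (h : v 1 ≠ 0 ∨ w 1 ≠ 0) :
    inner ℝ (gFlowLimit v) (gFlowLimit w) = v 1 * w 1 := by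
  unfold gFlowLimit
  split_ifs with hv hw hw <;> simp_all [PiLp.inner_apply, Fin.sum_univ_two, mul_comm]

theorem pi_div_two_le_angle_gFlowLimit {v w : EuclideanSpace ℝ (Fin 2)} (hvw : v 1 * w 1 ≤ 0)
    (h : v 1 ≠ 0 ∨ w 1 ≠ 0) : π / 2 ≤ InnerProductGeometry.angle (gFlowLimit v) (gFlowLimit w) :=
  pi_div_two_le_angle_of_inner_nonpos (by rwa [inner_gFlowLimit h])

theorem pi_div_two_lt_angle_gFlowLimit {v w : EuclideanSpace ℝ (Fin 2)} (hvw : v 1 * w 1 < 0) :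
    π / 2 < InnerProductGeometry.angle (gFlowLimit v) (gFlowLimit w) := by
  have h : v 1 ≠ 0 ∨ w 1 ≠ 0 := .inl (left_ne_zero_of_mul hvw.ne)
  exact pi_div_two_lt_angle_of_inner_neg (by rwa [inner_gFlowLimit h])

theorem tendsto_angle_gFlow {v w : EuclideanSpace ℝ (Fin 2)} (hv : v ≠ 0) (hw : w ≠ 0) :
    Tendsto (fun t => InnerProductGeometry.angle (gFlow t v) (gFlow t w)) atTop
      (𝓝 (InnerProductGeometry.angle (gFlowLimit v) (gFlowLimit w))) := by
  obtain ⟨c, hc, hcv⟩ := exists_pos_smul_gFlow_tendsto v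
  obtain ⟨d, hd, hdw⟩ := exists_pos_smul_gFlow_tendsto w
  have hcont := continuousAt_angle (x := (gFlowLimit v, gFlowLimit w))
    (gFlowLimit_ne_zero hv) (gFlowLimit_ne_zero hw)
  refine (hcont.tendsto.comp (hcv.prodMk_nhds hdw)).congr fun t => ?_
  simp [angle_smul_left_of_pos _ _ (hc t), angle_smul_right_of_pos _ _ (hd t)]

theorem tendsto_angle_gFlow_points {p q r : EuclideanSpace ℝ (Fin 2)} (hpq : p ≠ q)
    (hrq : r ≠ q) :
    Tendsto (fun t => ∠ (gFlow t p) (gFlow t q) (gFlow t r)) atTop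
      (𝓝 (InnerProductGeometry.angle (gFlowLimit (p - q)) (gFlowLimit (r - q)))) := by
  simpa only [EuclideanGeometry.angle, vsub_eq_sub, gFlow_sub] using
    tendsto_angle_gFlow (sub_ne_zero.2 hpq) (sub_ne_zero.2 hrq)

/-- A hinge with vertices `O = (0,0)`, `P₁`, `P₂`, `P₃` where `0 ≤ y₁ ≤ y₂`,
`0 < y₃ < y₂`, and `P₁`, `P₃` lie strictly on opposite sides of the line
`OP₂`, is not eternally Delaunay: for all sufficiently large `t` the sum of
the two angles opposite the shared edge `OP₂` exceeds `π`. -/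
theorem hinge_not_eternally_Delaunay
    (x₁ y₁ x₂ y₂ x₃ y₃ : ℝ)
    (h₁ : 0 ≤ y₁) (h₂ : y₁ ≤ y₂) (h₃ : 0 < y₃) (h₄ : y₃ < y₂)
    (hopp : (x₂ * y₁ - x₁ * y₂) * (x₂ * y₃ - x₃ * y₂) < 0) :
    ∃ T : ℝ, 0 ≤ T ∧ ∀ t ≥ T,
      EuclideanGeometry.angle (gFlow t (pt 0 0)) (gFlow t (pt x₃ y₃)) (gFlow t (pt x₂ y₂)) +
      EuclideanGeometry.angle (gFlow t (pt 0 0)) (gFlow t (pt x₁ y₁)) (gFlow t (pt x₂ y₂)) >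
        Real.pi := by
  have hOP₃ : pt 0 0 ≠ pt x₃ y₃ := fun h => h₃.ne (pt_inj.1 h).2
  have hP₂P₃ : pt x₂ y₂ ≠ pt x₃ y₃ := fun h => h₄.ne' (pt_inj.1 h).2
  have hOP₁ : pt 0 0 ≠ pt x₁ y₁ := by
    rintro h
    obtain ⟨rfl, rfl⟩ := pt_inj.1 h
    simp at hopp
  have hP₂P₁ : pt x₂ y₂ ≠ pt x₁ y₁ := by
    rintro h
    obtain ⟨rfl, rfl⟩ := pt_inj.1 h
    simp at hopp
  have hangle₃ := pi_div_two_lt_angle_gFlowLimit (v := pt 0 0 - pt x₃ y₃)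
    (w := pt x₂ y₂ - pt x₃ y₃) (by simp only [PiLp.sub_apply, pt_apply_one]; nlinarith)
  have hangle₁ := pi_div_two_le_angle_gFlowLimit (v := pt 0 0 - pt x₁ y₁)
    (w := pt x₂ y₂ - pt x₁ y₁) (by simp only [PiLp.sub_apply, pt_apply_one]; nlinarith)
    (by simp only [PiLp.sub_apply, pt_apply_one]; by_contra! h; linarith [h.1, h.2])
  have hsum := (tendsto_angle_gFlow_points hOP₃ hP₂P₃).add (tendsto_angle_gFlow_points hOP₁ hP₂P₁)
  obtain ⟨T, hT⟩ := eventually_atTop.1 (hsum.eventually_const_lt (by linarith : π < _))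
  exact ⟨max T 0, le_max_right _ _, fun t ht => hT t (le_of_max_le_left ht)⟩
end
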